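/- Let 0 < θ < 1 and x ≥ θ + 1/θ, and set u_θ := 1 − (θx − √(θ²x² − 4θ²))/(2θ²). Then u_θ ∈ [0,1) and the function g(u) := −(1/2)·θxu − (θ²/4)·(1−u)² − (1/2)·log(1−u) attains its minimum over [0,1) at u = u_θ: for every u ∈ [0,1), g(u) ≥ g(u_θ). -/

import Mathlib

/-!
With `t = 1 - u`, the derivative of `g` is `(θ²t² - θxt + 1) / (2t)`. The numerator factors
as `θ²(t - r)(t - R)`, where `r = 1 - u_θ` and `R = x/θ - r` are its two roots, and for
`0 < θ < 1`, `x ≥ θ + 1/θ` they satisfy `0 < r ≤ 1 ≤ R`. Hence on `t ∈ (0, 1]` the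
derivative changes sign exactly once, from `≤ 0` to `≥ 0` as `u` crosses `u_θ`: `g` decreases,
then increases.
-/

noncomputable section

/-- The `u`-dependent part of the large-deviation rate function in the regime
`θ(1-u) ≤ 1`: `g(u) = -(1/2)θxu - (θ²/4)(1-u)² - (1/2)log(1-u)`. -/
def gfun (θ x u : ℝ) : ℝ :=
  -(1 / 2) * (θ * x * u) - θ ^ 2 / 4 * (1 - u) ^ 2 - (1 / 2) * Real.log (1 - u)

/-- `u_θ = 1 - (θx - √(θ²x² - 4θ²))/(2θ²)`, solving `θ²(1-u)² - θx(1-u) + 1 = 0`. -/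
def uTheta (θ x : ℝ) : ℝ :=
  1 - (θ * x - Real.sqrt (θ ^ 2 * x ^ 2 - 4 * θ ^ 2)) / (2 * θ ^ 2)

open Set

theorem isMinOn_of_antitoneOn_of_monotoneOn {α β : Type*} [LinearOrder α] [Preorder β]
    {f : α → β} {a b c : α} (hanti : AntitoneOn f (Icc a c)) (hmono : MonotoneOn f (Ico c b))
    (hac : a ≤ c) (hcb : c < b) : IsMinOn f (Ico a b) c := by
  intro u hu
  rcases le_total u c with huc | hcu
  · exact hanti ⟨hu.1, huc⟩ ⟨hac, le_rfl⟩ huc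
  · exact hmono ⟨le_rfl, hcb⟩ ⟨hcu, hu.2⟩ hcu

section

variable {θ x r : ℝ}

theorem hasDerivAt_gfun (θ x : ℝ) {u : ℝ} (hu : u < 1) :
    HasDerivAt (gfun θ x) ((θ ^ 2 * (1 - u) ^ 2 - θ * x * (1 - u) + 1) / (2 * (1 - u))) u := by
  have hpos : 0 < 1 - u := sub_pos.2 hu
  have hsub : HasDerivAt (fun t : ℝ => 1 - t) (-1) u := by
    simpa using (hasDerivAt_id u).const_sub 1
  have hlog := (Real.hasDerivAt_log hpos.ne').comp u hsub
  have hlin := ((hasDerivAt_id u).const_mul (θ * x)).const_mul (-(1 / 2) : ℝ)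
  have hsq := (hsub.pow 2).const_mul (θ ^ 2 / 4)
  refine ((hlin.sub hsq).sub (hlog.const_mul (1 / 2))).congr_deriv ?_
  field_simp
  ring

theorem continuousOn_gfun (θ x : ℝ) : ContinuousOn (gfun θ x) (Iio 1) :=
  fun _ hu => (hasDerivAt_gfun θ x hu).continuousAt.continuousWithinAt

/-- Vieta: the second root of `θ²t² - θxt + 1` is `x/θ - r`. -/
theorem quadratic_eq_mul_sub_mul_sub (hθ : θ ≠ 0) (hr : θ ^ 2 * r ^ 2 - θ * x * r + 1 = 0)
    (t : ℝ) : θ ^ 2 * t ^ 2 - θ * x * t + 1 = θ ^ 2 * (t - r) * (t - (x / θ - r)) := by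
  field_simp
  linear_combination hr

theorem gfun_antitoneOn (hθ : θ ≠ 0) (hr : θ ^ 2 * r ^ 2 - θ * x * r + 1 = 0) (hr0 : 0 < r)
    (hR : 1 ≤ x / θ - r) : AntitoneOn (gfun θ x) (Icc 0 (1 - r)) := by
  have hsub : Icc 0 (1 - r) ⊆ Iio 1 := fun u hu => mem_Iio.2 (by linarith [hu.2])
  refine antitoneOn_of_hasDerivWithinAt_nonpos (convex_Icc _ _)
    ((continuousOn_gfun θ x).mono hsub)
    (fun u hu => (hasDerivAt_gfun θ x (hsub (interior_subset hu))).hasDerivWithinAt) ?_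
  intro u hu
  rw [interior_Icc] at hu
  rw [quadratic_eq_mul_sub_mul_sub hθ hr]
  apply div_nonpos_of_nonpos_of_nonneg _ (by linarith [hu.2])
  exact mul_nonpos_of_nonneg_of_nonpos
    (mul_nonneg (sq_nonneg θ) (by linarith [hu.2])) (by linarith [hu.1])

theorem gfun_monotoneOn (hθ : θ ≠ 0) (hr : θ ^ 2 * r ^ 2 - θ * x * r + 1 = 0)
    (hrR : r ≤ x / θ - r) : MonotoneOn (gfun θ x) (Ico (1 - r) 1) := by
  have hsub : Ico (1 - r) 1 ⊆ Iio 1 := fun u hu => hu.2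
  refine monotoneOn_of_hasDerivWithinAt_nonneg (convex_Ico _ _)
    ((continuousOn_gfun θ x).mono hsub)
    (fun u hu => (hasDerivAt_gfun θ x (hsub (interior_subset hu))).hasDerivWithinAt) ?_
  intro u hu
  rw [interior_Ico] at hu
  rw [quadratic_eq_mul_sub_mul_sub hθ hr]
  apply div_nonneg _ (by linarith [hu.2])
  exact mul_nonneg_of_nonpos_of_nonpos
    (mul_nonpos_of_nonneg_of_nonpos (sq_nonneg θ) (by linarith [hu.1])) (by linarith [hu.1])

theorem sq_sqrt_discrim (θ : ℝ) (hx : 4 ≤ x ^ 2) :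
    Real.sqrt (θ ^ 2 * x ^ 2 - 4 * θ ^ 2) ^ 2 = θ ^ 2 * x ^ 2 - 4 * θ ^ 2 :=
  Real.sq_sqrt (by nlinarith [mul_nonneg (sq_nonneg θ) (sub_nonneg.2 hx)])

theorem one_sub_uTheta_isRoot (hθ : θ ≠ 0) (hx : 4 ≤ x ^ 2) :
    θ ^ 2 * (1 - uTheta θ x) ^ 2 - θ * x * (1 - uTheta θ x) + 1 = 0 := by
  have hs := sq_sqrt_discrim θ hx
  rw [uTheta, sub_sub_cancel]
  generalize Real.sqrt (θ ^ 2 * x ^ 2 - 4 * θ ^ 2) = s at hs ⊢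
  field_simp
  linear_combination hs

theorem one_sub_uTheta_pos (hθ : 0 < θ) (hx : 2 ≤ x) : 0 < 1 - uTheta θ x := by
  have hs := sq_sqrt_discrim θ (by nlinarith : 4 ≤ x ^ 2)
  rw [uTheta, sub_sub_cancel]
  apply div_pos _ (by positivity)
  nlinarith [Real.sqrt_nonneg (θ ^ 2 * x ^ 2 - 4 * θ ^ 2), mul_pos hθ (by linarith : 0 < x)]

theorem one_sub_uTheta_le_one (hθ : 0 < θ) (hθx : θ ^ 2 + 1 ≤ θ * x) :
    1 - uTheta θ x ≤ 1 := by
  have hx : 4 ≤ x ^ 2 := by nlinarith [sq_nonneg (θ - 1), sq_nonneg (x - 2)]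
  have hs := sq_sqrt_discrim θ hx
  rw [uTheta, sub_sub_cancel, div_le_one (by positivity)]
  nlinarith [Real.sqrt_nonneg (θ ^ 2 * x ^ 2 - 4 * θ ^ 2), sq_nonneg θ]

end

/-- For `0 < θ < 1` and `x ≥ θ + 1/θ`, one has `u_θ ∈ [0,1)` and `g` attains its minimum
over `[0,1)` at `u_θ`. -/
theorem gfun_min_subcritical_large_x (θ x : ℝ) (hθ0 : 0 < θ) (hθ1 : θ < 1)
    (hx : θ + 1 / θ ≤ x) :
    uTheta θ x ∈ Set.Ico (0 : ℝ) 1 ∧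
    ∀ u ∈ Set.Ico (0 : ℝ) 1, gfun θ x (uTheta θ x) ≤ gfun θ x u := by
  have hθx : θ ^ 2 + 1 ≤ θ * x := by
    have := mul_le_mul_of_nonneg_left hx hθ0.le
    rwa [mul_add, mul_one_div_cancel hθ0.ne', ← sq] at this
  have hx2 : 2 ≤ x := by nlinarith [sq_nonneg (θ - 1)]
  have hroot := one_sub_uTheta_isRoot hθ0.ne' (by nlinarith : 4 ≤ x ^ 2)
  have hr0 := one_sub_uTheta_pos hθ0 hx2
  have hr1 := one_sub_uTheta_le_one hθ0 hθx
  have hR : 1 ≤ x / θ - (1 - uTheta θ x) := by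
    have : 2 ≤ x / θ := by rw [le_div_iff₀ hθ0]; nlinarith
    linarith
  have hanti := gfun_antitoneOn hθ0.ne' hroot hr0 hR
  have hmono := gfun_monotoneOn hθ0.ne' hroot (by linarith)
  rw [sub_sub_cancel] at hanti hmono
  refine ⟨⟨by linarith, by linarith⟩, isMinOn_iff.1 ?_⟩
  exact isMinOn_of_antitoneOn_of_monotoneOn hanti hmono (by linarith) (by linarith)

end
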